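/- arXiv:1505.05381 — 2 statements merged into one kernel-verified Lean document; each statement's English description precedes it below -/
import Mathlib

section
/- Let A₀ = (E+F)/2 be the midpoint of EF, D₀ = (B+C)/2 the midpoint of BC, and A₃' = T_{P'}(D). Then the four lines A₀P, D₀Q', DQ, and A₃'P' are concurrent at the point λ⁻¹(A) = T_P(T_{P'}⁻¹(A)): that is, the point Z₀ := T_P(T_{P'}⁻¹(A)) is collinear with each of the pairs (A₀, P), (D₀, Q'), (D, Q), and (A₃', P'). -/
/-!
Work in barycentric coordinates with respect to `A, B, C`. An affine map sends a point with
coordinates `(a, b, c)` to `a • T A + b • T B + c • T C`, so solving `T_{P'} X = A` gives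
`X = (-α(β+γ)/(2βγ), (γ+α)/(2γ), (α+β)/(2β))` and then
`Z = T_P X = (α(β+γ)/(2βγ), (γ-α)/(2γ), (β-α)/(2β))`.
Each of the four collinearities becomes the vanishing of the 3 × 3 determinant of the
barycentric coordinates of the three points, a rational identity in `α, β, γ`: a nonzero
left kernel vector of the coordinate matrix has zero sum (the rows sum to `1`) and is
therefore an affine dependence among the three points.
-/

noncomputable section

abbrev Pt := EuclideanSpace ℝ (Fin 2)

theorem AffineMap.map_smul_add_smul_add_smul {k V₁ V₂ : Type*} [CommRing k] [AddCommGroup V₁]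
    [Module k V₁] [AddCommGroup V₂] [Module k V₂] (f : V₁ →ᵃ[k] V₂) {a b c : k}
    (h : a + b + c = 1) (x y z : V₁) :
    f (a • x + b • y + c • z) = a • f x + b • f y + c • f z := by
  rw [f.decomp]
  simp only [Pi.add_apply, map_add, map_smul]
  linear_combination (norm := module) -h • f 0

theorem AffineEquiv.map_smul_add_smul_add_smul {k V₁ V₂ : Type*} [CommRing k] [AddCommGroup V₁]
    [Module k V₁] [AddCommGroup V₂] [Module k V₂] (f : V₁ ≃ᵃ[k] V₂) {a b c : k}
    (h : a + b + c = 1) (x y z : V₁) :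
    f (a • x + b • y + c • z) = a • f x + b • f y + c • f z :=
  f.toAffineMap.map_smul_add_smul_add_smul h x y z

theorem not_affineIndependent_of_det_eq_zero {k V ι : Type*} [Field k] [AddCommGroup V]
    [Module k V] [Fintype ι] [DecidableEq ι] {p q : ι → V} (M : Matrix ι ι k)
    (hp : ∀ i, p i = ∑ j, M i j • q j) (hM : ∀ i, ∑ j, M i j = 1) (hdet : M.det = 0) :
    ¬AffineIndependent k p := by
  obtain ⟨v, hv, hvM⟩ := Matrix.exists_vecMul_eq_zero_iff.2 hdet
  have hvM' : ∀ j, ∑ i, v i * M i j = 0 := fun j => congrFun hvM j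
  intro hind
  refine hv (funext fun i => affineIndependent_iff.1 hind Finset.univ v ?_ ?_ i (Finset.mem_univ i))
  · calc ∑ i, v i = ∑ i, v i * ∑ j, M i j := by simp [hM]
      _ = ∑ j, ∑ i, v i * M i j := by rw [Finset.sum_comm]; simp [Finset.mul_sum]
      _ = 0 := by simp [hvM']
  · calc ∑ i, v i • p i = ∑ j, (∑ i, v i * M i j) • q j := by
          simp only [hp, Finset.smul_sum, Finset.sum_smul, smul_smul]; exact Finset.sum_comm
      _ = 0 := by simp [hvM']

theorem collinear_of_det_eq_zero {k V : Type*} [Field k] [AddCommGroup V] [Module k V]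
    {A B C X₁ X₂ X₃ : V} {x₁ y₁ z₁ x₂ y₂ z₂ x₃ y₃ z₃ : k}
    (hX₁ : X₁ = x₁ • A + y₁ • B + z₁ • C) (hX₂ : X₂ = x₂ • A + y₂ • B + z₂ • C)
    (hX₃ : X₃ = x₃ • A + y₃ • B + z₃ • C)
    (h₁ : x₁ + y₁ + z₁ = 1) (h₂ : x₂ + y₂ + z₂ = 1) (h₃ : x₃ + y₃ + z₃ = 1)
    (hdet : x₁ * (y₂ * z₃ - z₂ * y₃) - y₁ * (x₂ * z₃ - z₂ * x₃) + z₁ * (x₂ * y₃ - y₂ * x₃) = 0) :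
    Collinear k {X₁, X₂, X₃} := by
  rw [collinear_iff_not_affineIndependent_set]
  have hdet' : !![x₁, y₁, z₁; x₂, y₂, z₂; x₃, y₃, z₃].det = 0 := by
    rw [Matrix.det_fin_three, ← hdet]
    simp only [Matrix.of_apply, Matrix.cons_val', Matrix.cons_val_zero, Matrix.cons_val_one,
      Matrix.cons_val, Matrix.cons_val_fin_one]
    ring
  refine not_affineIndependent_of_det_eq_zero (q := ![A, B, C]) _ ?_ ?_ hdet' <;>
    intro i <;> fin_cases i <;> simp [Fin.sum_univ_three, *]

section Triangle

variable {V : Type*} [AddCommGroup V] [Module ℝ V] {A B C : V} {α β γ : ℝ}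

theorem isotomicCevianMap_symm_apply_A (hβ : β ≠ 0) (hγ : γ ≠ 0) (hβγ : β + γ ≠ 0)
    (hγα : γ + α ≠ 0) (hαβ : α + β ≠ 0) {T : V ≃ᵃ[ℝ] V}
    (hA : T A = (β + γ)⁻¹ • (γ • B + β • C)) (hB : T B = (γ + α)⁻¹ • (γ • A + α • C))
    (hC : T C = (α + β)⁻¹ • (β • A + α • B)) :
    T.symm A =
      (-(α * (β + γ)) / (2 * β * γ)) • A + ((γ + α) / (2 * γ)) • B + ((α + β) / (2 * β)) • C := by
  rw [T.symm_apply_eq, T.map_smul_add_smul_add_smul (by field_simp; ring), hA, hB, hC]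
  match_scalars <;> field_simp <;> ring

theorem cevianMap_isotomicCevianMap_symm_apply_A (hβ : β ≠ 0) (hγ : γ ≠ 0) (hβγ : β + γ ≠ 0)
    (hγα : γ + α ≠ 0) (hαβ : α + β ≠ 0) {T T' : V ≃ᵃ[ℝ] V}
    (hA : T A = (β + γ)⁻¹ • (β • B + γ • C)) (hB : T B = (γ + α)⁻¹ • (α • A + γ • C))
    (hC : T C = (α + β)⁻¹ • (α • A + β • B))
    (hA' : T' A = (β + γ)⁻¹ • (γ • B + β • C)) (hB' : T' B = (γ + α)⁻¹ • (γ • A + α • C))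
    (hC' : T' C = (α + β)⁻¹ • (β • A + α • B)) :
    T (T'.symm A) =
      (α * (β + γ) / (2 * β * γ)) • A + ((γ - α) / (2 * γ)) • B + ((β - α) / (2 * β)) • C := by
  rw [isotomicCevianMap_symm_apply_A hβ hγ hβγ hγα hαβ hA' hB' hC',
    T.map_smul_add_smul_add_smul (by field_simp; ring), hA, hB, hC]
  match_scalars <;> field_simp <;> ring

theorem isotomicCevianMap_apply_D (hβγ : β + γ ≠ 0) {T : V ≃ᵃ[ℝ] V} {D : V}
    (hD : D = (β + γ)⁻¹ • (β • B + γ • C))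
    (hA : T A = (β + γ)⁻¹ • (γ • B + β • C)) (hB : T B = (γ + α)⁻¹ • (γ • A + α • C))
    (hC : T C = (α + β)⁻¹ • (β • A + α • B)) :
    T D =
      (β * γ / ((β + γ) * (γ + α)) + β * γ / ((β + γ) * (α + β))) • A
        + (γ * α / ((β + γ) * (α + β))) • B + (β * α / ((β + γ) * (γ + α))) • C := by
  have hD' : D = (0 : ℝ) • A + (β / (β + γ)) • B + (γ / (β + γ)) • C := by
    rw [hD]; match_scalars <;> field_simp
  rw [hD', T.map_smul_add_smul_add_smul (by field_simp; ring), hA, hB, hC]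
  match_scalars <;> field_simp <;> ring

variable {Z : V}
  (hZ : Z = (α * (β + γ) / (2 * β * γ)) • A + ((γ - α) / (2 * γ)) • B + ((β - α) / (2 * β)) • C)

include hZ

theorem collinear_Z_A₀_P (hsum : α + β + γ = 1) (hβ : β ≠ 0) (hγ : γ ≠ 0)
    (hγα : γ + α ≠ 0) (hαβ : α + β ≠ 0) {E F P : V}
    (hE : E = (γ + α)⁻¹ • (α • A + γ • C)) (hF : F = (α + β)⁻¹ • (α • A + β • B))
    (hP : P = α • A + β • B + γ • C) :
    Collinear ℝ {Z, midpoint ℝ E F, P} := by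
  have hA₀ : midpoint ℝ E F = (α * (2 * α + β + γ) / (2 * (γ + α) * (α + β))) • A
      + (β / (2 * (α + β))) • B + (γ / (2 * (γ + α))) • C := by
    rw [hE, hF, midpoint_eq_smul_add, invOf_eq_inv]
    match_scalars <;> field_simp; ring
  have hα_eq : α = 1 - β - γ := by linarith
  refine collinear_of_det_eq_zero hZ hA₀ hP ?_ ?_ hsum ?_
  · field_simp; ring
  · field_simp; rw [hα_eq]; ring
  · field_simp; rw [hα_eq]; ring

theorem collinear_Z_D₀_Q' (hsum : α + β + γ = 1) (hβ : β ≠ 0) (hγ : γ ≠ 0) {G P Q' : V}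
    (hG : G = (3 : ℝ)⁻¹ • (A + B + C)) (hP : P = α • A + β • B + γ • C)
    (hQ' : Q' = G - (2 : ℝ)⁻¹ • (P - G)) :
    Collinear ℝ {Z, midpoint ℝ B C, Q'} := by
  have hD₀ : midpoint ℝ B C = (0 : ℝ) • A + (1 / 2 : ℝ) • B + (1 / 2 : ℝ) • C := by
    rw [midpoint_eq_smul_add, invOf_eq_inv]
    module
  have hQ'' : Q' = ((1 - α) / 2) • A + ((1 - β) / 2) • B + ((1 - γ) / 2) • C := by
    rw [hQ', hP, hG]
    module
  have hα_eq : α = 1 - β - γ := by linarith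
  refine collinear_of_det_eq_zero hZ hD₀ hQ'' ?_ (by norm_num) ?_ ?_
  · field_simp; ring
  · rw [hα_eq]; ring
  · field_simp; rw [hα_eq]; ring

theorem collinear_Z_D_Q (hβ : β ≠ 0) (hγ : γ ≠ 0) (hβγ : β + γ ≠ 0)
    (hs : α * β + β * γ + γ * α ≠ 0) {G P' D Q : V}
    (hG : G = (3 : ℝ)⁻¹ • (A + B + C))
    (hP' : P' = (α * β + β * γ + γ * α)⁻¹ • ((β * γ) • A + (γ * α) • B + (α * β) • C))
    (hQ : Q = G - (2 : ℝ)⁻¹ • (P' - G)) (hD : D = (β + γ)⁻¹ • (β • B + γ • C)) :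
    Collinear ℝ {Z, D, Q} := by
  set s := α * β + β * γ + γ * α
  have hD' : D = (0 : ℝ) • A + (β / (β + γ)) • B + (γ / (β + γ)) • C := by
    rw [hD]; match_scalars <;> field_simp
  have hQ' : Q = ((1 - β * γ / s) / 2) • A + ((1 - γ * α / s) / 2) • B
      + ((1 - α * β / s) / 2) • C := by
    rw [hQ, hP', hG]; match_scalars <;> field_simp <;> ring
  refine collinear_of_det_eq_zero hZ hD' hQ' ?_ (by field_simp; ring) ?_ ?_
  · field_simp; ring
  · field_simp; ring
  · field_simp; ring

theorem collinear_Z_A₃'_P' (hβ : β ≠ 0) (hγ : γ ≠ 0) (hβγ : β + γ ≠ 0) (hγα : γ + α ≠ 0)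
    (hαβ : α + β ≠ 0) (hs : α * β + β * γ + γ * α ≠ 0) {A₃' P' : V}
    (hA₃' : A₃' = (β * γ / ((β + γ) * (γ + α)) + β * γ / ((β + γ) * (α + β))) • A
        + (γ * α / ((β + γ) * (α + β))) • B + (β * α / ((β + γ) * (γ + α))) • C)
    (hP' : P' = (α * β + β * γ + γ * α)⁻¹ • ((β * γ) • A + (γ * α) • B + (α * β) • C)) :
    Collinear ℝ {Z, A₃', P'} := by
  set s := α * β + β * γ + γ * α
  have hP'' : P' = (β * γ / s) • A + (γ * α / s) • B + (α * β / s) • C := by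
    rw [hP']; match_scalars <;> field_simp
  refine collinear_of_det_eq_zero hZ hA₃' hP'' ?_ ?_ ?_ ?_
  · field_simp; ring
  · field_simp; ring
  · field_simp; ring
  · field_simp; ring

end Triangle

theorem stmt14_general
    (A B C : Pt)
    (α β γ : ℝ) (hsum : α + β + γ = 1)
    (hβ : β ≠ 0) (hγ : γ ≠ 0)
    (hβγ : β + γ ≠ 0) (hγα : γ + α ≠ 0) (hαβ : α + β ≠ 0)
    (hs : α * β + β * γ + γ * α ≠ 0)
    (G : Pt) (hG : G = (3:ℝ)⁻¹ • (A + B + C))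
    (P : Pt) (hP : P = α • A + β • B + γ • C)
    (P' : Pt)
    (hP'' : P' = (α * β + β * γ + γ * α)⁻¹ • ((β * γ) • A + (γ * α) • B + (α * β) • C))
    (Q : Pt) (hQ : Q = G - (2:ℝ)⁻¹ • (P' - G))
    (Q' : Pt) (hQ' : Q' = G - (2:ℝ)⁻¹ • (P - G))
    (D E F : Pt)
    (hD : D = (β + γ)⁻¹ • (β • B + γ • C))
    (hE : E = (γ + α)⁻¹ • (α • A + γ • C))
    (hF : F = (α + β)⁻¹ • (α • A + β • B))
    (D₃ E₃ F₃ : Pt)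
    (hD₃ : D₃ = (β + γ)⁻¹ • (γ • B + β • C))
    (hE₃ : E₃ = (γ + α)⁻¹ • (γ • A + α • C))
    (hF₃ : F₃ = (α + β)⁻¹ • (β • A + α • B))
    (TP : Pt ≃ᵃ[ℝ] Pt) (hTPA : TP A = D) (hTPB : TP B = E) (hTPC : TP C = F)
    (TP' : Pt ≃ᵃ[ℝ] Pt) (hTP'A : TP' A = D₃) (hTP'B : TP' B = E₃) (hTP'C : TP' C = F₃)

    (A₀ : Pt) (hA₀ : A₀ = midpoint ℝ E F)
    (D₀ : Pt) (hD₀ : D₀ = midpoint ℝ B C)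
    (A₃' : Pt) (hA₃' : A₃' = TP' D) :
    Collinear ℝ ({TP (TP'.symm A), A₀, P} : Set Pt) ∧
    Collinear ℝ ({TP (TP'.symm A), D₀, Q'} : Set Pt) ∧
    Collinear ℝ ({TP (TP'.symm A), D, Q} : Set Pt) ∧
    Collinear ℝ ({TP (TP'.symm A), A₃', P'} : Set Pt) := by
  subst hD₃ hE₃ hF₃
  have hZ := cevianMap_isotomicCevianMap_symm_apply_A hβ hγ hβγ hγα hαβ
    (hTPA.trans hD) (hTPB.trans hE) (hTPC.trans hF) hTP'A hTP'B hTP'C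
  have hA₃'' := hA₃'.trans (isotomicCevianMap_apply_D hβγ hD hTP'A hTP'B hTP'C)
  subst hA₀ hD₀
  exact ⟨collinear_Z_A₀_P hZ hsum hβ hγ hγα hαβ hE hF hP,
    collinear_Z_D₀_Q' hZ hsum hβ hγ hG hP hQ',
    collinear_Z_D_Q hZ hβ hγ hβγ hs hG hP'' hQ hD,
    collinear_Z_A₃'_P' hZ hβ hγ hβγ hγα hαβ hs hA₃'' hP''⟩

theorem stmt14
    (A B C : Pt) (hABC : AffineIndependent ℝ ![A, B, C])
    (α β γ : ℝ) (hsum : α + β + γ = 1)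
    (hα : α ≠ 0) (hβ : β ≠ 0) (hγ : γ ≠ 0)
    (hβγ : β + γ ≠ 0) (hγα : γ + α ≠ 0) (hαβ : α + β ≠ 0)
    (hab : α ≠ β) (hbc : β ≠ γ) (hca : γ ≠ α)
    (hs : α * β + β * γ + γ * α ≠ 0)
    (G : Pt) (hG : G = (3:ℝ)⁻¹ • (A + B + C))
    (P : Pt) (hP : P = α • A + β • B + γ • C)
    (P' : Pt)
    (hP'' : P' = (α * β + β * γ + γ * α)⁻¹ • ((β * γ) • A + (γ * α) • B + (α * β) • C))
    (Q : Pt) (hQ : Q = G - (2:ℝ)⁻¹ • (P' - G))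
    (Q' : Pt) (hQ' : Q' = G - (2:ℝ)⁻¹ • (P - G))
    (D E F : Pt)
    (hD : D = (β + γ)⁻¹ • (β • B + γ • C))
    (hE : E = (γ + α)⁻¹ • (α • A + γ • C))
    (hF : F = (α + β)⁻¹ • (α • A + β • B))
    (D₃ E₃ F₃ : Pt)
    (hD₃ : D₃ = (β + γ)⁻¹ • (γ • B + β • C))
    (hE₃ : E₃ = (γ + α)⁻¹ • (γ • A + α • C))
    (hF₃ : F₃ = (α + β)⁻¹ • (β • A + α • B))
    (TP : Pt ≃ᵃ[ℝ] Pt) (hTPA : TP A = D) (hTPB : TP B = E) (hTPC : TP C = F)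
    (TP' : Pt ≃ᵃ[ℝ] Pt) (hTP'A : TP' A = D₃) (hTP'B : TP' B = E₃) (hTP'C : TP' C = F₃)

    (A₀ : Pt) (hA₀ : A₀ = midpoint ℝ E F)
    (D₀ : Pt) (hD₀ : D₀ = midpoint ℝ B C)
    (A₃' : Pt) (hA₃' : A₃' = TP' D) :
    Collinear ℝ ({TP (TP'.symm A), A₀, P} : Set Pt) ∧
    Collinear ℝ ({TP (TP'.symm A), D₀, Q'} : Set Pt) ∧
    Collinear ℝ ({TP (TP'.symm A), D, Q} : Set Pt) ∧
    Collinear ℝ ({TP (TP'.symm A), A₃', P'} : Set Pt) :=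
  stmt14_general A B C α β γ hsum hβ hγ hβγ hγα hαβ hs G hG P hP P' hP'' Q hQ Q' hQ' D E F hD hE hF
    D₃ E₃ F₃ hD₃ hE₃ hF₃ TP hTPA hTPB hTPC TP' hTP'A hTP'B hTP'C A₀ hA₀ D₀ hD₀ A₃' hA₃'
end
end

section
/- Suppose (instead of s ≠ 0) that αβ + βγ + γα = 0, i.e. P lies on the Steiner circumellipse of ABC (so the isotomic conjugate of P is an infinite point). Then the point Z := G + (1/3)(T_P(G) − G), one-third of the way from G to G₁ = T_P(G), satisfies T_{P'}(T_P⁻¹(Z)) = Z, and Z is the unique point of ℝ² fixed by the affine map λ = T_{P'} ∘ T_P⁻¹. -/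
/-!
A point `R` is fixed by `T_{P'} ∘ T_P⁻¹` exactly when `T_P` and `T_{P'}` agree at `T_P⁻¹ R`.
At each vertex the two maps differ by a vector parallel to the opposite side:
`D₃ - D = u • (C - B)`, `E₃ - E = v • (A - C)`, `F₃ - F = w • (B - A)` with
`u = (β - γ) / (β + γ)` and its cyclic shifts. Hence at the point with barycentric
coordinates `(x, y, z)` they differ by `x u (C - B) + y v (A - C) + z w (B - A)`, which vanishes
iff `x u = y v = z w`; as long as `uv + vw + wu ≠ 0` this forces
`(x, y, z) = (vw, wu, uv) / (uv + vw + wu)`. On the Steiner circumellipse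
`uv + vw + wu = -9`, and a direct computation shows that `T_P` maps this point to `Z`.
-/

noncomputable section

open Finset Module

theorem mul_eq_mul_and_mul_eq_mul_iff {K : Type*} [Field K] {u v w x y z s : K}
    (hxyz : x + y + z = 1) (hs : u * v + v * w + w * u = s) (hs0 : s ≠ 0) :
    (x * u = y * v ∧ y * v = z * w) ↔ (x = v * w / s ∧ y = w * u / s ∧ z = u * v / s) := by
  constructor
  · rintro ⟨hxy, hyz⟩
    refine ⟨?_, ?_, ?_⟩ <;> rw [eq_div_iff hs0, ← hs]
    · linear_combination v * w * hxyz + (v + w) * hxy + v * hyz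
    · linear_combination w * u * hxyz - w * hxy + u * hyz
    · linear_combination u * v * hxyz - v * hxy - (u + v) * hyz
  · rintro ⟨rfl, rfl, rfl⟩
    constructor <;> ring

section Barycentric

variable {V W : Type*} [AddCommGroup V] [AddCommGroup W]

theorem AffineMap.map_smul_add_smul_add_smul_s19 {k : Type*} [Ring k] [Module k V] [Module k W]
    (f : V →ᵃ[k] W) (A B C : V) {a b c : k} (h : a + b + c = 1) :
    f (a • A + b • B + c • C) = a • f A + b • f B + c • f C := by
  have hw : ∑ i, ![a, b, c] i = 1 := by simpa [Fin.sum_univ_three] using h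
  have key := univ.map_affineCombination ![A, B, C] _ hw f
  rw [affineCombination_eq_linear_combination _ _ _ hw,
    affineCombination_eq_linear_combination _ _ _ hw] at key
  simpa [Fin.sum_univ_three] using key

theorem AffineIndependent.eq_zero_of_smul_add_smul_add_smul_eq_zero {k : Type*} [Ring k]
    [Module k V] {A B C : V} (h : AffineIndependent k ![A, B, C]) {a b c : k}
    (hsum : a + b + c = 0) (hzero : a • A + b • B + c • C = 0) : a = 0 ∧ b = 0 ∧ c = 0 := by
  have := h.eq_zero_of_sum_eq_zero (s := univ) (w := ![a, b, c])
    (by simpa [Fin.sum_univ_three]) (by simpa [Fin.sum_univ_three])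
  exact ⟨this 0 (mem_univ _), this 1 (mem_univ _), this 2 (mem_univ _)⟩

theorem AffineIndependent.smul_sub_add_smul_sub_add_smul_sub_eq_zero_iff {k : Type*}
    [CommRing k] [Module k V] {A B C : V} (h : AffineIndependent k ![A, B, C]) {p q r : k} :
    p • (C - B) + q • (A - C) + r • (B - A) = 0 ↔ p = q ∧ q = r := by
  constructor
  · intro hzero
    obtain ⟨hA, -, hC⟩ := h.eq_zero_of_smul_add_smul_add_smul_eq_zero (a := q - r) (b := r - p)
      (c := p - q) (by abel) (by rw [← hzero]; module)
    exact ⟨sub_eq_zero.1 hC, sub_eq_zero.1 hA⟩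
  · rintro ⟨rfl, rfl⟩
    module

theorem AffineIndependent.exists_eq_smul_add_smul_add_smul {K : Type*} [Field K] [Module K V]
    [FiniteDimensional K V] (hV : finrank K V = 2) {A B C : V}
    (h : AffineIndependent K ![A, B, C]) (X : V) :
    ∃ a b c : K, a + b + c = 1 ∧ X = a • A + b • B + c • C := by
  have htop : affineSpan K (Set.range ![A, B, C]) = ⊤ :=
    h.affineSpan_eq_top_iff_card_eq_finrank_add_one.2 (by simp [hV])
  obtain ⟨w, hw, hX⟩ := eq_affineCombination_of_mem_affineSpan_of_fintype
    (htop ▸ AffineSubspace.mem_top K V X)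
  refine ⟨w 0, w 1, w 2, by simpa [Fin.sum_univ_three] using hw, ?_⟩
  rw [hX, affineCombination_eq_linear_combination _ _ _ hw]
  simp [Fin.sum_univ_three]

theorem AffineMap.apply_eq_apply_iff_of_sub_eq_smul_sub {K : Type*} [Field K] [Module K V]
    {A B C : V} (hABC : AffineIndependent K ![A, B, C]) {f g : V →ᵃ[K] V} {u v w s : K}
    (hA : g A - f A = u • (C - B)) (hB : g B - f B = v • (A - C)) (hC : g C - f C = w • (B - A))
    (hs : u * v + v * w + w * u = s) (hs0 : s ≠ 0) {x y z : K} (hxyz : x + y + z = 1) :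
    g (x • A + y • B + z • C) = f (x • A + y • B + z • C) ↔
      x = v * w / s ∧ y = w * u / s ∧ z = u * v / s := by
  have hdiff : g (x • A + y • B + z • C) - f (x • A + y • B + z • C) =
      (x * u) • (C - B) + (y * v) • (A - C) + (z * w) • (B - A) := by
    rw [g.map_smul_add_smul_add_smul_s19 _ _ _ hxyz, f.map_smul_add_smul_add_smul_s19 _ _ _ hxyz,
      mul_smul, mul_smul, mul_smul, ← hA, ← hB, ← hC]
    module
  rw [← sub_eq_zero, hdiff, hABC.smul_sub_add_smul_sub_add_smul_sub_eq_zero_iff,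
    mul_eq_mul_and_mul_eq_mul_iff hxyz hs hs0]

end Barycentric

def isotomicRatio (β γ : ℝ) : ℝ := (β - γ) / (β + γ)

section Cevian

variable {V : Type*} [AddCommGroup V] [Module ℝ V]

theorem isotomic_cevian_sub_cevian (β γ : ℝ) (B C : V) :
    (β + γ)⁻¹ • (γ • B + β • C) - (β + γ)⁻¹ • (β • B + γ • C) = isotomicRatio β γ • (C - B) := by
  simp only [isotomicRatio, div_eq_mul_inv]
  module

variable {α β γ : ℝ}

theorem isotomicRatio_mul_add_mul_add_mul (hsum : α + β + γ = 1)
    (hs : α * β + β * γ + γ * α = 0) (hβγ : β + γ ≠ 0) (hγα : γ + α ≠ 0) (hαβ : α + β ≠ 0) :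
    isotomicRatio β γ * isotomicRatio γ α + isotomicRatio γ α * isotomicRatio α β +
      isotomicRatio α β * isotomicRatio β γ = -9 := by
  simp only [isotomicRatio]
  field_simp
  linear_combination 8 * (α * β + β * γ + γ * α) * hsum + 8 * hs

theorem map_isotomic_coincidence_eq (f : V →ᵃ[ℝ] V) {A B C : V} (hsum : α + β + γ = 1)
    (hs : α * β + β * γ + γ * α = 0) (hβγ : β + γ ≠ 0) (hγα : γ + α ≠ 0) (hαβ : α + β ≠ 0)
    (hA : f A = (β + γ)⁻¹ • (β • B + γ • C)) (hB : f B = (γ + α)⁻¹ • (α • A + γ • C))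
    (hC : f C = (α + β)⁻¹ • (α • A + β • B)) :
    f ((isotomicRatio γ α * isotomicRatio α β / (-9)) • A +
        (isotomicRatio α β * isotomicRatio β γ / (-9)) • B +
        (isotomicRatio β γ * isotomicRatio γ α / (-9)) • C) =
      (3:ℝ)⁻¹ • (A + B + C) + (3:ℝ)⁻¹ • (f ((3:ℝ)⁻¹ • (A + B + C)) - (3:ℝ)⁻¹ • (A + B + C)) := by
  have hweights := isotomicRatio_mul_add_mul_add_mul hsum hs hβγ hγα hαβ
  rw [f.map_smul_add_smul_add_smul_s19 _ _ _ (by linear_combination hweights / (-9)),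
    smul_add, smul_add, f.map_smul_add_smul_add_smul_s19 _ _ _ (by norm_num), hA, hB, hC]
  simp only [isotomicRatio]
  match_scalars
  · field_simp
    linear_combination -18 * (γ + α + 2 * β) * hs
  · field_simp
    linear_combination -18 * (α + β + 2 * γ) * hs
  · field_simp
    linear_combination -18 * (β + γ + 2 * α) * hs

end Cevian
theorem stmt19_general
    (A B C : Pt) (hABC : AffineIndependent ℝ ![A, B, C])
    (α β γ : ℝ) (hsum : α + β + γ = 1)
    (hβγ : β + γ ≠ 0) (hγα : γ + α ≠ 0) (hαβ : α + β ≠ 0)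
    (hs : α * β + β * γ + γ * α = 0)
    (G : Pt) (hG : G = (3:ℝ)⁻¹ • (A + B + C))
    (D E F : Pt)
    (hD : D = (β + γ)⁻¹ • (β • B + γ • C))
    (hE : E = (γ + α)⁻¹ • (α • A + γ • C))
    (hF : F = (α + β)⁻¹ • (α • A + β • B))
    (D₃ E₃ F₃ : Pt)
    (hD₃ : D₃ = (β + γ)⁻¹ • (γ • B + β • C))
    (hE₃ : E₃ = (γ + α)⁻¹ • (γ • A + α • C))
    (hF₃ : F₃ = (α + β)⁻¹ • (β • A + α • B))
    (TP : Pt ≃ᵃ[ℝ] Pt) (hTPA : TP A = D) (hTPB : TP B = E) (hTPC : TP C = F)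
    (TP' : Pt ≃ᵃ[ℝ] Pt) (hTP'A : TP' A = D₃) (hTP'B : TP' B = E₃) (hTP'C : TP' C = F₃)

    (Z : Pt) (hZ : Z = G + (3:ℝ)⁻¹ • (TP G - G)) :
    TP' (TP.symm Z) = Z ∧ ∀ R : Pt, TP' (TP.symm R) = R → R = Z := by
  set u := isotomicRatio β γ
  set v := isotomicRatio γ α
  set w := isotomicRatio α β
  have hweights : u * v + v * w + w * u = -9 :=
    isotomicRatio_mul_add_mul_add_mul hsum hs hβγ hγα hαβ
  have hcoinc : ∀ {x y z : ℝ}, x + y + z = 1 →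
      (TP' (x • A + y • B + z • C) = TP (x • A + y • B + z • C) ↔
        x = v * w / (-9) ∧ y = w * u / (-9) ∧ z = u * v / (-9)) := fun hxyz =>
    AffineMap.apply_eq_apply_iff_of_sub_eq_smul_sub (f := TP.toAffineMap)
      (g := TP'.toAffineMap) hABC
      (by simpa [hTPA, hTP'A, hD, hD₃] using isotomic_cevian_sub_cevian β γ B C)
      (by simpa [hTPB, hTP'B, hE, hE₃, add_comm] using isotomic_cevian_sub_cevian γ α C A)
      (by simpa [hTPC, hTP'C, hF, hF₃] using isotomic_cevian_sub_cevian α β A B)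
      hweights (by norm_num) hxyz
  set Q := (v * w / (-9)) • A + (w * u / (-9)) • B + (u * v / (-9)) • C
  have hQ : TP Q = Z := by
    rw [hZ, hG]
    exact map_isotomic_coincidence_eq TP.toAffineMap hsum hs hβγ hγα hαβ
      (hTPA.trans hD) (hTPB.trans hE) (hTPC.trans hF)
  have hQ' : TP' Q = TP Q :=
    (hcoinc (by linear_combination hweights / (-9))).2 ⟨rfl, rfl, rfl⟩
  refine ⟨by rw [← hQ, TP.symm_apply_apply, hQ'], fun R hR => ?_⟩
  obtain ⟨x, y, z, hxyz, hX⟩ :=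
    hABC.exists_eq_smul_add_smul_add_smul finrank_euclideanSpace_fin (TP.symm R)
  have hRcoinc : TP' (x • A + y • B + z • C) = TP (x • A + y • B + z • C) := by
    rw [← hX, hR, TP.apply_symm_apply]
  obtain ⟨rfl, rfl, rfl⟩ := (hcoinc hxyz).1 hRcoinc
  rw [← hQ, ← TP.apply_symm_apply R, hX]

theorem stmt19
    (A B C : Pt) (hABC : AffineIndependent ℝ ![A, B, C])
    (α β γ : ℝ) (hsum : α + β + γ = 1)
    (hα : α ≠ 0) (hβ : β ≠ 0) (hγ : γ ≠ 0)
    (hβγ : β + γ ≠ 0) (hγα : γ + α ≠ 0) (hαβ : α + β ≠ 0)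
    (hab : α ≠ β) (hbc : β ≠ γ) (hca : γ ≠ α)
    (hs : α * β + β * γ + γ * α = 0)
    (G : Pt) (hG : G = (3:ℝ)⁻¹ • (A + B + C))
    (P : Pt) (hP : P = α • A + β • B + γ • C)
    (D E F : Pt)
    (hD : D = (β + γ)⁻¹ • (β • B + γ • C))
    (hE : E = (γ + α)⁻¹ • (α • A + γ • C))
    (hF : F = (α + β)⁻¹ • (α • A + β • B))
    (D₃ E₃ F₃ : Pt)
    (hD₃ : D₃ = (β + γ)⁻¹ • (γ • B + β • C))
    (hE₃ : E₃ = (γ + α)⁻¹ • (γ • A + α • C))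
    (hF₃ : F₃ = (α + β)⁻¹ • (β • A + α • B))
    (TP : Pt ≃ᵃ[ℝ] Pt) (hTPA : TP A = D) (hTPB : TP B = E) (hTPC : TP C = F)
    (TP' : Pt ≃ᵃ[ℝ] Pt) (hTP'A : TP' A = D₃) (hTP'B : TP' B = E₃) (hTP'C : TP' C = F₃)

    (Z : Pt) (hZ : Z = G + (3:ℝ)⁻¹ • (TP G - G)) :
    TP' (TP.symm Z) = Z ∧ ∀ R : Pt, TP' (TP.symm R) = R → R = Z :=
  stmt19_general A B C hABC α β γ hsum hβγ hγα hαβ hs G hG D E F hD hE hF D₃ E₃ F₃ hD₃ hE₃ hF₃ TP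
    hTPA hTPB hTPC TP' hTP'A hTP'B hTP'C Z hZ
end
end
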